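/- Let k, q, p ∈ ℕ with q ≤ k. Then the number of partitions with k parts (no bound on part size), of size p and trace q, equals the sum over all pairs (a,b) ∈ ℕ×ℕ with q² + a + b = p of the product: (number of partitions with k−q parts fitting in a (k−q)×q box, of size a) × (number of partitions with q parts, of any size of parts, of total size b). (This is the combinatorial content of the formula for rank_{M₂} H^{p,q}(Gr_k(ℝ^{∞,1})).) -/

import Mathlib

/-! The trace of a weakly increasing `λ : Fin k → ℕ` is the side of its Durfee square: since
`λ i + i` is strictly increasing, `trace λ = q` exactly when the first `k - q` parts are at most
`q` and the last `q` parts are at least `q`. Cutting out the `q × q` square therefore splits `λ`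
bijectively into a partition in a `(k - q) × q` box (the first `k - q` parts) and an arbitrary
partition with `q` parts (the last `q` parts minus `q`), and the size drops by `q²`. Sorting the
pairs by the sizes of the two pieces gives the formula. -/

open Finset

/-- Number of partitions with `k` parts fitting in a `k × m` box, of size `p`. -/
noncomputable def partCountSize (p k m : ℕ) : ℕ :=
  Nat.card {l : Fin k → ℕ // Monotone l ∧ (∀ i, l i ≤ m) ∧ (∑ i, l i) = p}

/-- Number of partitions with `k` parts (no bound on part size), of size `p`. -/
noncomputable def partCountSizeUnbounded (p k : ℕ) : ℕ :=
  Nat.card {l : Fin k → ℕ // Monotone l ∧ (∑ i, l i) = p}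

/-- Number of partitions with `k` parts (no bound on part size), of size `p`
and trace `t`. -/
noncomputable def partCountTraceUnbounded (p k t : ℕ) : ℕ :=
  Nat.card {l : Fin k → ℕ // Monotone l ∧ (∑ i, l i) = p ∧
    (Finset.univ.filter (fun i : Fin k => k ≤ l i + (i : ℕ))).card = t}

theorem Nat.card_add_add_eq_sum_mul {α β : Type*} (s : α → ℕ) (t : β → ℕ)
    [∀ n, Finite {a // s a = n}] [∀ n, Finite {b // t b = n}] (c p : ℕ) :
    Nat.card {x : α × β // c + s x.1 + t x.2 = p} =
      ∑ ab ∈ (range (p + 1) ×ˢ range (p + 1)).filter (fun ab => c + ab.1 + ab.2 = p),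
        Nat.card {a // s a = ab.1} * Nat.card {b // t b = ab.2} := by
  set S := (range (p + 1) ×ˢ range (p + 1)).filter (fun ab => c + ab.1 + ab.2 = p)
  let e : {x : α × β // c + s x.1 + t x.2 = p} ≃
      Σ ab : S, {a // s a = ab.1.1} × {b // t b = ab.1.2} :=
    { toFun := fun x => ⟨⟨(s x.1.1, t x.1.2), by
          simp only [S, mem_filter, mem_product, mem_range]; omega⟩, ⟨x.1.1, rfl⟩, ⟨x.1.2, rfl⟩⟩
      invFun := fun y => ⟨(y.2.1.1, y.2.2.1), by
          rw [y.2.1.2, y.2.2.2]; exact (mem_filter.1 y.1.2).2⟩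
      left_inv := fun _ => rfl
      right_inv := by
        rintro ⟨⟨⟨a', b'⟩, hab⟩, ⟨a, ha⟩, ⟨b, hb⟩⟩
        dsimp only at ha hb
        subst ha hb
        rfl }
  rw [Nat.card_congr e, Nat.card_sigma, ← sum_coe_sort S]
  simp only [Nat.card_prod]

instance finite_subtype_sum_eq {k : ℕ} (P : (Fin k → ℕ) → Prop) (n : ℕ) :
    Finite {l : Subtype P // ∑ i, l.1 i = n} :=
  Finite.of_injective (β := (Nat.antidiagonalTuple k n : Set (Fin k → ℕ)))
    (fun l => ⟨l.1.1, Nat.mem_antidiagonalTuple.2 l.2⟩)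
    fun _ _ h => by simpa [Subtype.ext_iff] using h

theorem Monotone.fin_append {α : Type*} [Preorder α] {m n : ℕ} {f : Fin m → α} {g : Fin n → α}
    (hf : Monotone f) (hg : Monotone g) (hfg : ∀ i j, f i ≤ g j) :
    Monotone (Fin.append f g) := by
  intro i j hij
  induction i using Fin.addCases with
  | left i =>
    induction j using Fin.addCases with
    | left j => simpa using hf ((Fin.strictMono_castAdd n).le_iff_le.1 hij)
    | right j => simpa using hfg i j
  | right i =>
    induction j using Fin.addCases with
    | left j => simp only [Fin.le_def, Fin.val_natAdd, Fin.val_castAdd] at hij; omega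
    | right j => simpa using hg ((Fin.natAdd_le_natAdd_iff m).1 hij)

def partTrace {n : ℕ} (l : Fin n → ℕ) : ℕ := #{i | n ≤ l i + i}

theorem partTrace_add {m q : ℕ} (l : Fin (m + q) → ℕ) :
    partTrace l = #{i : Fin m | m + q ≤ l (Fin.castAdd q i) + i} +
      #{j : Fin q | q ≤ l (Fin.natAdd m j) + j} := by
  simp only [partTrace, card_filter, Fin.sum_univ_add, Fin.val_castAdd, Fin.val_natAdd,
    show ∀ a b, m + q ≤ a + (m + b) ↔ q ≤ a + b from fun _ _ => by omega]

theorem partTrace_eq_iff {m q : ℕ} {l : Fin (m + q) → ℕ} (hl : Monotone l) :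
    partTrace l = q ↔ (∀ i, l (Fin.castAdd q i) ≤ q) ∧ ∀ j, q ≤ l (Fin.natAdd m j) := by
  have hl' : ∀ a b : Fin (m + q), (a : ℕ) ≤ b → l a ≤ l b := fun a b h => hl (Fin.le_def.2 h)
  rw [partTrace_add]
  refine ⟨fun h => ⟨fun i => ?_, fun j => ?_⟩, fun ⟨hbot, htop⟩ => ?_⟩
  · by_contra! hi
    have := i.2
    have hbot : 0 < #{i : Fin m | m + q ≤ l (Fin.castAdd q i) + i} :=
      card_pos.2 ⟨⟨m - 1, by omega⟩, by
        have := hl' (Fin.castAdd q i) (Fin.castAdd q ⟨m - 1, by omega⟩) (by simp; omega)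
        simp only [mem_filter, mem_univ, true_and]
        omega⟩
    have htop : #{j : Fin q | q ≤ l (Fin.natAdd m j) + j} = q := by
      rw [filter_true_of_mem fun j _ => ?_, card_univ, Fintype.card_fin]
      have := hl' (Fin.castAdd q i) (Fin.natAdd m j) (by simp; omega)
      omega
    omega
  · by_contra! hj
    have := j.2
    have hbot : #{i : Fin m | m + q ≤ l (Fin.castAdd q i) + i} = 0 :=
      card_eq_zero.2 <| filter_false_of_mem fun i _ => by
        have := hl' (Fin.castAdd q i) (Fin.natAdd m j) (by simp; omega)
        omega
    have htop : #{j : Fin q | q ≤ l (Fin.natAdd m j) + j} < q := by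
      have hzero : ¬ q ≤ l (Fin.natAdd m ⟨0, by omega⟩) + 0 := by
        have := hl' (Fin.natAdd m ⟨0, by omega⟩) (Fin.natAdd m j) (by simp)
        omega
      have hss : ({j : Fin q | q ≤ l (Fin.natAdd m j) + j} : Finset _) ⊂ univ :=
        filter_ssubset.2 ⟨_, mem_univ _, hzero⟩
      simpa using card_lt_card hss
    omega
  · rw [filter_false_of_mem fun i _ => by have := hbot i; omega,
      filter_true_of_mem fun j _ => by have := htop j; omega]
    simp

abbrev MonotoneTuple (k : ℕ) := {l : Fin k → ℕ // Monotone l}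

abbrev BoundedMonotoneTuple (k m : ℕ) := {l : Fin k → ℕ // Monotone l ∧ ∀ i, l i ≤ m}

def durfeeEquiv (m q : ℕ) :
    {l : Fin (m + q) → ℕ // Monotone l ∧ partTrace l = q} ≃
      BoundedMonotoneTuple m q × MonotoneTuple q where
  toFun l :=
    (⟨fun i => l.1 (Fin.castAdd q i), l.2.1.comp (Fin.strictMono_castAdd q).monotone,
      ((partTrace_eq_iff l.2.1).1 l.2.2).1⟩,
     ⟨fun j => l.1 (Fin.natAdd m j) - q, fun _ _ h =>
      Nat.sub_le_sub_right (l.2.1 ((Fin.strictMono_natAdd m).monotone h)) q⟩)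
  invFun x :=
    have hmono : Monotone (Fin.append x.1.1 fun j => x.2.1 j + q) :=
      x.1.2.1.fin_append (fun _ _ h => Nat.add_le_add_right (x.2.2 h) q)
        fun i _ => (x.1.2.2 i).trans (Nat.le_add_left q _)
    ⟨_, hmono, (partTrace_eq_iff hmono).2 ⟨by simpa using x.1.2.2, by simp⟩⟩
  left_inv l := by
    have htop := ((partTrace_eq_iff l.2.1).1 l.2.2).2
    ext i
    induction i using Fin.addCases <;> simp [Nat.sub_add_cancel (htop _)]
  right_inv x := by ext <;> simp

theorem sum_durfeeEquiv_symm {m q : ℕ} (x : BoundedMonotoneTuple m q × MonotoneTuple q) :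
    ∑ i, ((durfeeEquiv m q).symm x).1 i = q ^ 2 + ∑ i, x.1.1 i + ∑ j, x.2.1 j := by
  simp only [durfeeEquiv, Equiv.symm_mk, Equiv.coe_fn_mk, Fin.sum_univ_add, Fin.append_left,
    Fin.append_right, sum_add_distrib, sum_const, card_univ, Fintype.card_fin, smul_eq_mul]
  ring

/-- Corner decomposition for unbounded partitions: the combinatorial content of the
formula for `rank_{M₂} H^{p,q}(Gr_k(ℝ^{∞,1}))`. -/
theorem partCountTraceUnbounded_corner_decomposition (k q p : ℕ) (hqk : q ≤ k) :
    partCountTraceUnbounded p k q =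
      ∑ ab ∈ (Finset.range (p + 1) ×ˢ Finset.range (p + 1)).filter
          (fun ab => q ^ 2 + ab.1 + ab.2 = p),
        partCountSize ab.1 (k - q) q * partCountSizeUnbounded ab.2 q := by
  obtain ⟨m, rfl⟩ : ∃ m, k = m + q := ⟨k - q, by omega⟩
  rw [Nat.add_sub_cancel]
  calc partCountTraceUnbounded p (m + q) q
      = Nat.card {l : {l : Fin (m + q) → ℕ // Monotone l ∧ partTrace l = q} //
          ∑ i, l.1 i = p} :=
        Nat.card_congr <| (Equiv.subtypeEquivRight fun _ =>
          ⟨fun ⟨hl, hp, hq⟩ => ⟨⟨hl, hq⟩, hp⟩, fun ⟨⟨hl, hq⟩, hp⟩ => ⟨hl, hp, hq⟩⟩).trans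
          (Equiv.subtypeSubtypeEquivSubtypeInter (fun l => Monotone l ∧ partTrace l = q)
            fun l => ∑ i, l i = p).symm
    _ = Nat.card {x : BoundedMonotoneTuple m q × MonotoneTuple q //
          q ^ 2 + ∑ i, x.1.1 i + ∑ j, x.2.1 j = p} :=
        Nat.card_congr <| ((durfeeEquiv m q).symm.subtypeEquiv fun x => by
          rw [sum_durfeeEquiv_symm]).symm
    _ = ∑ ab ∈ (range (p + 1) ×ˢ range (p + 1)).filter (fun ab => q ^ 2 + ab.1 + ab.2 = p),
          Nat.card {μ : BoundedMonotoneTuple m q // ∑ i, μ.1 i = ab.1} *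
            Nat.card {ν : MonotoneTuple q // ∑ j, ν.1 j = ab.2} :=
        Nat.card_add_add_eq_sum_mul (fun μ : BoundedMonotoneTuple m q => ∑ i, μ.1 i)
          (fun ν : MonotoneTuple q => ∑ j, ν.1 j) (q ^ 2) p
    _ = _ := by
      refine sum_congr rfl fun ab _ => congr_arg₂ _ ?_ ?_
      · exact Nat.card_congr <| (Equiv.subtypeSubtypeEquivSubtypeInter
          (fun μ : Fin m → ℕ => Monotone μ ∧ ∀ i, μ i ≤ q) fun μ => ∑ i, μ i = ab.1).trans
          (Equiv.subtypeEquivRight fun _ => and_assoc)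
      · exact Nat.card_congr <| Equiv.subtypeSubtypeEquivSubtypeInter
          (fun ν : Fin q → ℕ => Monotone ν) fun ν => ∑ j, ν j = ab.2
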